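/- arXiv:2109.00543 — 9 statements merged into one kernel-verified Lean document; each statement's English description precedes it below -/
import Mathlib

section
/- Let H be a complex Hilbert space, let C be a positive invertible bounded linear operator on H, and let (f_i)_{i∈ℕ} be a C-controlled Bessel sequence in H with bound B > 0. Then for every sequence (a_i)_{i∈ℕ} ∈ ℓ²(ℕ, ℂ) the series ∑_i a_i · (C f_i) converges in H, and the resulting synthesis map U : ℓ²(ℕ, ℂ) → H, U((a_i)) = ∑_i a_i · (C f_i), is a bounded linear operator with ‖U‖ ≤ √B · ‖C^{1/2}‖. -/
/-!
Polarizing the controlled Bessel form `x ↦ ∑ ⟪f i, x⟫ ⟪x, C (f i)⟫` bounds the real part of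
`∑ ⟪f i, y⟫ ⟪x, C (f i)⟫` by `B ‖x + y‖² / 4`; rescaling `(x, y)` to `(‖y‖ x, ‖x‖ y)` improves this
to `B ‖x‖ ‖y‖`. For `y = C z` the summands are `‖⟪C (f i), z⟫‖²`, as `C` is symmetric, so `(C f_i)`
is an ordinary Bessel sequence with bound `B ‖C‖ ≤ B ‖R‖²`. By Cauchy–Schwarz, the synthesis
operator of a Bessel sequence with bound `K²` is defined on all of `ℓ²` and has norm at most `K`.
-/

open scoped InnerProductSpace lp
open Complex

namespace lp

variable {ι G : Type*} [NormedAddCommGroup G]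

theorem summable_norm_sq (a : ℓ²(ι, G)) : Summable fun i => ‖a i‖ ^ 2 := by
  simpa using (lp.memℓp a).summable (by norm_num : (0 : ℝ) < (2 : ENNReal).toReal)

theorem sqrt_sum_norm_sq_le_norm (a : ℓ²(ι, G)) (F : Finset ι) :
    √(∑ i ∈ F, ‖a i‖ ^ 2) ≤ ‖a‖ := by
  refine Real.sqrt_le_iff.2 ⟨norm_nonneg a, ?_⟩
  simpa using lp.sum_rpow_le_norm_rpow (by norm_num : (0 : ℝ) < (2 : ENNReal).toReal) a F

end lp

section Synthesis

variable {𝕜 E ι : Type*} [RCLike 𝕜] [NormedAddCommGroup E] [InnerProductSpace 𝕜 E]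

theorem norm_sum_smul_le_of_bessel {g : ι → E} {K : ℝ} (hK : 0 ≤ K)
    (hg : ∀ z F, ∑ i ∈ F, ‖⟪g i, z⟫_𝕜‖ ^ 2 ≤ K ^ 2 * ‖z‖ ^ 2) (a : ι → 𝕜) (F : Finset ι) :
    ‖∑ i ∈ F, a i • g i‖ ≤ K * √(∑ i ∈ F, ‖a i‖ ^ 2) := by
  set v := ∑ i ∈ F, a i • g i
  have hsq : ‖v‖ ^ 2 ≤ √(∑ i ∈ F, ‖a i‖ ^ 2) * (K * ‖v‖) :=
    calc ‖v‖ ^ 2 = RCLike.re ⟪v, v⟫_𝕜 := norm_sq_eq_re_inner v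
      _ ≤ ‖⟪v, v⟫_𝕜‖ := RCLike.re_le_norm _
      _ ≤ ∑ i ∈ F, ‖a i‖ * ‖⟪g i, v⟫_𝕜‖ := by
        simp only [v, sum_inner, inner_smul_left]
        refine (norm_sum_le _ _).trans_eq ?_
        simp only [norm_mul, RCLike.norm_conj]
      _ ≤ √(∑ i ∈ F, ‖a i‖ ^ 2) * √(∑ i ∈ F, ‖⟪g i, v⟫_𝕜‖ ^ 2) :=
        Real.sum_mul_le_sqrt_mul_sqrt F _ _
      _ ≤ √(∑ i ∈ F, ‖a i‖ ^ 2) * (K * ‖v‖) := by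
        gcongr
        exact Real.sqrt_le_iff.2 ⟨by positivity, (hg v F).trans_eq (by ring)⟩
  rcases (norm_nonneg v).eq_or_lt with hv | hv
  · rw [← hv]; positivity
  · nlinarith

variable [CompleteSpace E]

theorem summable_smul_of_bessel {g : ι → E} {K : ℝ} (hK : 0 ≤ K)
    (hg : ∀ z F, ∑ i ∈ F, ‖⟪g i, z⟫_𝕜‖ ^ 2 ≤ K ^ 2 * ‖z‖ ^ 2) (a : ℓ²(ι, 𝕜)) :
    Summable fun i => a i • g i := by
  refine summable_iff_vanishing_norm.2 fun ε hε => ?_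
  obtain ⟨F, hF⟩ :=
    summable_iff_vanishing_norm.1 (lp.summable_norm_sq a) ((ε / (K + 1)) ^ 2) (by positivity)
  refine ⟨F, fun t ht => ?_⟩
  have htail : √(∑ i ∈ t, ‖a i‖ ^ 2) < ε / (K + 1) :=
    (Real.sqrt_lt' (by positivity)).2 <| (le_abs_self _).trans_lt (hF t ht)
  calc ‖∑ i ∈ t, a i • g i‖ ≤ K * √(∑ i ∈ t, ‖a i‖ ^ 2) := norm_sum_smul_le_of_bessel hK hg a t
    _ ≤ K * (ε / (K + 1)) := by gcongr
    _ < ε := by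
      rw [mul_div_assoc', div_lt_iff₀ (by positivity)]
      nlinarith

theorem exists_synthesis_of_bessel {g : ι → E} {K : ℝ} (hK : 0 ≤ K)
    (hg : ∀ z F, ∑ i ∈ F, ‖⟪g i, z⟫_𝕜‖ ^ 2 ≤ K ^ 2 * ‖z‖ ^ 2) :
    ∃ U : ℓ²(ι, 𝕜) →L[𝕜] E, (∀ a, HasSum (fun i => a i • g i) (U a)) ∧ ‖U‖ ≤ K := by
  have hs a := (summable_smul_of_bessel hK hg a).hasSum
  let U : ℓ²(ι, 𝕜) →ₗ[𝕜] E :=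
    { toFun a := ∑' i, a i • g i
      map_add' a b := by simpa [add_smul] using ((hs a).add (hs b)).tsum_eq
      map_smul' c a := by simpa [smul_smul] using ((hs a).const_smul c).tsum_eq }
  have hbound a : ‖U a‖ ≤ K * ‖a‖ := by
    refine le_of_tendsto (hs a).norm (.of_forall fun F => ?_)
    exact (norm_sum_smul_le_of_bessel hK hg a F).trans
      (mul_le_mul_of_nonneg_left (lp.sqrt_sum_norm_sq_le_norm a F) hK)
  exact ⟨U.mkContinuous K hbound, hs, U.mkContinuous_norm_le hK hbound⟩

end Synthesis

section ControlledBessel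

variable {H ι : Type*} [NormedAddCommGroup H] [InnerProductSpace ℂ H]

/-- `⟪f i, x⟫_ℂ * ⟪x, C (f i)⟫_ℂ` is the paper's `⟪x, f_i⟫ ⟪C f_i, x⟫`, its inner product being
linear in the first argument. -/
def IsControlledBessel (C : H →L[ℂ] H) (f : ι → H) (B : ℝ) : Prop :=
  ∀ x : H, ∃ r : ℝ, 0 ≤ r ∧ r ≤ B * ‖x‖ ^ 2 ∧
    HasSum (fun i => ⟪f i, x⟫_ℂ * ⟪x, C (f i)⟫_ℂ) (r : ℂ)

theorem inner_mul_inner_polarization (u w x y : H) :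
    4 * (⟪u, y⟫_ℂ * ⟪x, w⟫_ℂ) =
      ⟪u, x + y⟫_ℂ * ⟪x + y, w⟫_ℂ - ⟪u, x - y⟫_ℂ * ⟪x - y, w⟫_ℂ
        - I * (⟪u, x + I • y⟫_ℂ * ⟪x + I • y, w⟫_ℂ)
        + I * (⟪u, x - I • y⟫_ℂ * ⟪x - I • y, w⟫_ℂ) := by
  simp only [inner_add_left, inner_add_right, inner_sub_left, inner_sub_right, inner_smul_left,
    inner_smul_right, conj_I]
  linear_combination 2 * (⟪u, y⟫_ℂ * ⟪x, w⟫_ℂ - ⟪u, x⟫_ℂ * ⟪y, w⟫_ℂ) * I_sq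

variable {C : H →L[ℂ] H} {f : ι → H} {B : ℝ}

theorem IsControlledBessel.exists_hasSum_inner_mul_inner (hf : IsControlledBessel C f B)
    (x y : H) : ∃ s : ℂ, HasSum (fun i => ⟪f i, y⟫_ℂ * ⟪x, C (f i)⟫_ℂ) s ∧
      4 * s.re ≤ B * ‖x + y‖ ^ 2 := by
  obtain ⟨r₁, -, hr₁, hs₁⟩ := hf (x + y)
  obtain ⟨r₂, hr₂, -, hs₂⟩ := hf (x - y)
  obtain ⟨r₃, -, -, hs₃⟩ := hf (x + I • y)
  obtain ⟨r₄, -, -, hs₄⟩ := hf (x - I • y)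
  refine ⟨(r₁ - r₂ - I * r₃ + I * r₄) / 4, ?_, ?_⟩
  · refine ((((hs₁.sub hs₂).sub (hs₃.mul_left I)).add (hs₄.mul_left I)).div_const 4).congr_fun
      fun i => ?_
    rw [eq_div_iff (by norm_num), mul_comm, inner_mul_inner_polarization]
  · simp only [div_ofNat_re, add_re, sub_re, ofReal_re, mul_re, I_re, zero_mul, I_im, ofReal_im,
      mul_zero, sub_self, sub_zero, add_zero]
    linarith

theorem IsControlledBessel.re_le_of_hasSum (hf : IsControlledBessel C f B) (hB : 0 ≤ B)
    {x y : H} {s : ℂ}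
    (hs : HasSum (fun i => ⟪f i, y⟫_ℂ * ⟪x, C (f i)⟫_ℂ) s) : s.re ≤ B * ‖x‖ * ‖y‖ := by
  by_cases hxy : x = 0 ∨ y = 0
  · have : s = 0 := hs.unique (by rcases hxy with rfl | rfl <;> simp)
    rcases hxy with rfl | rfl <;> simp [this]
  obtain ⟨hx, hy⟩ := not_or.1 hxy
  obtain ⟨s', hs', hle⟩ := hf.exists_hasSum_inner_mul_inner ((‖y‖ : ℂ) • x) ((‖x‖ : ℂ) • y)
  have hs's : s' = (‖x‖ * ‖y‖ : ℂ) * s := hs'.unique <| (hs.mul_left _).congr_fun fun i => by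
    simp only [inner_smul_left, inner_smul_right, conj_ofReal]
    ring
  have hnorm : ‖(‖y‖ : ℂ) • x + (‖x‖ : ℂ) • y‖ ≤ 2 * (‖x‖ * ‖y‖) := by
    refine (norm_add_le _ _).trans_eq ?_
    simp only [coe_smul, norm_smul, norm_norm]
    ring
  have hscaled : 4 * (‖x‖ * ‖y‖) * s.re ≤ 4 * (‖x‖ * ‖y‖) * (B * ‖x‖ * ‖y‖) :=
    calc 4 * (‖x‖ * ‖y‖) * s.re = 4 * s'.re := by
          simp only [hs's, mul_re, mul_im, ofReal_re, ofReal_im, mul_zero, zero_mul, add_zero,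
            sub_zero]
          ring
      _ ≤ B * (2 * (‖x‖ * ‖y‖)) ^ 2 := hle.trans (by gcongr)
      _ = 4 * (‖x‖ * ‖y‖) * (B * ‖x‖ * ‖y‖) := by ring
  exact le_of_mul_le_mul_left hscaled (by positivity)

theorem IsControlledBessel.sum_norm_inner_sq_le (hf : IsControlledBessel C f B)
    (hC : (C : H →ₗ[ℂ] H).IsSymmetric) (hB : 0 ≤ B) (z : H) (F : Finset ι) :
    ∑ i ∈ F, ‖⟪C (f i), z⟫_ℂ‖ ^ 2 ≤ B * ‖C‖ * ‖z‖ ^ 2 := by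
  obtain ⟨s, hs, -⟩ := hf.exists_hasSum_inner_mul_inner z (C z)
  have hterm i : ⟪f i, C z⟫_ℂ * ⟪z, C (f i)⟫_ℂ = ((‖⟪C (f i), z⟫_ℂ‖ ^ 2 : ℝ) : ℂ) := by
    have hCf : ⟪C (f i), z⟫_ℂ = ⟪f i, C z⟫_ℂ := hC (f i) z
    rw [hCf, ← inner_conj_symm z, ← hCf]
    push_cast
    exact RCLike.mul_conj _
  have hre : HasSum (fun i => ‖⟪C (f i), z⟫_ℂ‖ ^ 2) s.re := by
    simpa only [hterm, ofReal_re] using Complex.hasSum_re hs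
  calc ∑ i ∈ F, ‖⟪C (f i), z⟫_ℂ‖ ^ 2 ≤ s.re := sum_le_hasSum F (fun _ _ => sq_nonneg _) hre
    _ ≤ B * ‖z‖ * ‖C z‖ := hf.re_le_of_hasSum hB hs
    _ ≤ B * ‖z‖ * (‖C‖ * ‖z‖) := by gcongr; exact C.le_opNorm z
    _ = B * ‖C‖ * ‖z‖ ^ 2 := by ring

end ControlledBessel

theorem controlled_bessel_synthesis_bounded_general
    {H : Type*} [NormedAddCommGroup H] [InnerProductSpace ℂ H] [CompleteSpace H]
    (C : H →L[ℂ] H) (hC : C.IsPositive)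
    (R : H →L[ℂ] H) (hRsq : R ∘L R = C)
    (f : ℕ → H) (B : ℝ) (hB : 0 < B)
    (hBessel : ∀ x : H, ∃ r : ℝ, 0 ≤ r ∧ r ≤ B * ‖x‖ ^ 2 ∧
      HasSum (fun i => ⟪f i, x⟫_ℂ * ⟪x, C (f i)⟫_ℂ) (r : ℂ)) :
    ∃ U : lp (fun _ : ℕ => ℂ) 2 →L[ℂ] H,
      (∀ a : lp (fun _ : ℕ => ℂ) 2, HasSum (fun i => a i • C (f i)) (U a)) ∧
      ‖U‖ ≤ Real.sqrt B * ‖R‖ := by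
  have hCR : ‖C‖ ≤ ‖R‖ ^ 2 := hRsq ▸ (R.opNorm_comp_le R).trans_eq (sq _).symm
  refine exists_synthesis_of_bessel (by positivity) fun z F => ?_
  calc ∑ i ∈ F, ‖⟪C (f i), z⟫_ℂ‖ ^ 2 ≤ B * ‖C‖ * ‖z‖ ^ 2 :=
        IsControlledBessel.sum_norm_inner_sq_le hBessel hC.isSymmetric hB.le z F
    _ ≤ (√B * ‖R‖) ^ 2 * ‖z‖ ^ 2 := by rw [mul_pow, Real.sq_sqrt hB.le]; gcongr

/-- The synthesis operator of a `C`-controlled Bessel sequence is a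
well-defined bounded operator from `ℓ²(ℕ, ℂ)` to `H` with norm at most `√B · ‖C^{1/2}‖`.
Here `R` is the (unique) positive square root of the positive invertible operator `C`,
and the paper's inner product `⟪f, g⟫` (linear in the first argument) is Mathlib's
`⟪g, f⟫_ℂ`. -/
theorem controlled_bessel_synthesis_bounded
    {H : Type*} [NormedAddCommGroup H] [InnerProductSpace ℂ H] [CompleteSpace H]
    (C : H →L[ℂ] H) (hC : C.IsPositive)
    (Cinv : H →L[ℂ] H) (hCr : C ∘L Cinv = 1) (hCl : Cinv ∘L C = 1)
    (R : H →L[ℂ] H) (hR : R.IsPositive) (hRsq : R ∘L R = C)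
    (f : ℕ → H) (B : ℝ) (hB : 0 < B)
    (hBessel : ∀ x : H, ∃ r : ℝ, 0 ≤ r ∧ r ≤ B * ‖x‖ ^ 2 ∧
      HasSum (fun i => ⟪f i, x⟫_ℂ * ⟪x, C (f i)⟫_ℂ) (r : ℂ)) :
    ∃ U : lp (fun _ : ℕ => ℂ) 2 →L[ℂ] H,
      (∀ a : lp (fun _ : ℕ => ℂ) 2, HasSum (fun i => a i • C (f i)) (U a)) ∧
      ‖U‖ ≤ Real.sqrt B * ‖R‖ :=
  controlled_bessel_synthesis_bounded_general C hC R hRsq f B hB hBessel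
end

section
/- Let H be a complex Hilbert space, let C be a positive invertible bounded linear operator on H, and let (f_i)_{i∈ℕ} be a C-controlled frame for H with bounds A, B (0 < A ≤ B). Then (f_i) is an ordinary frame for H: for every f ∈ H, A · ‖C^{1/2}‖^{-2} · ‖f‖² ≤ ∑_i |⟪f, f_i⟫|² ≤ B · ‖C^{-1/2}‖² · ‖f‖². -/
/-!
Polarizing the controlled frame sums shows that `∑ ⟪f i, y⟫ ⟪x, C (f i)⟫` converges for all `x, y`
to a bounded sesquilinear form, i.e. to `⟪T x, y⟫` for a positive operator `T`. The ordinary frame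
sums are then `⟪S x, x⟫` with `S = T C⁻¹`, so `S` is positive as well. Since `T` and `S` are
self-adjoint, `C⁻¹` commutes with `T` and `C` commutes with `S`; for commuting `P ≥ 0` and
self-adjoint `Q` one has `Q P ≤ ‖Q‖ P`, which gives `T ≤ ‖C‖ S` and `S ≤ ‖C⁻¹‖ T`. It remains to
note `‖C‖ ≤ ‖C^{1/2}‖²` and `‖C⁻¹‖ ≤ ‖C^{-1/2}‖²`.
-/

open scoped InnerProductSpace
open ContinuousLinearMap

lemma IsSelfAdjoint.of_mul_eq_one {M : Type*} [Monoid M] [StarMul M] {a b : M}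
    (ha : IsSelfAdjoint a) (h : a * b = 1) : IsSelfAdjoint b := by
  calc star b = star (a * b) * b := by rw [star_mul, ha.star_eq, mul_assoc, h, mul_one]
    _ = b := by rw [h, star_one, one_mul]

lemma IsSelfAdjoint.mul_le_norm_smul_of_nonneg {A : Type*} [CStarAlgebra A] [PartialOrder A]
    [StarOrderedRing A] {p q : A} (hq : IsSelfAdjoint q) (hp : 0 ≤ p)
    (hpq : IsSelfAdjoint (p * q)) : p * q ≤ ‖q‖ • p := by
  have hcomm : Commute q p := ((hp.isSelfAdjoint.commute_iff hq).2 hpq).symm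
  have := Commute.mul_nonneg (sub_nonneg.2 hq.le_algebraMap_norm_self) hp
    ((Algebra.commute_algebraMap_left _ p).sub_left hcomm)
  rwa [sub_mul, sub_nonneg, ← Algebra.smul_def, hcomm.eq] at this

theorem IsSelfAdjoint.le_norm_smul_mul_and_mul_le_norm_smul {A : Type*} [CStarAlgebra A]
    [PartialOrder A] [StarOrderedRing A] {c d t : A} (hc : IsSelfAdjoint c) (hcd : c * d = 1)
    (hdc : d * c = 1) (ht : 0 ≤ t) (htd : 0 ≤ t * d) :
    t ≤ ‖c‖ • (t * d) ∧ t * d ≤ ‖d‖ • t := by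
  have htdc : t * d * c = t := by rw [mul_assoc, hdc, mul_one]
  refine ⟨?_, (hc.of_mul_eq_one hcd).mul_le_norm_smul_of_nonneg ht htd.isSelfAdjoint⟩
  have := hc.mul_le_norm_smul_of_nonneg htd (htdc.symm ▸ ht.isSelfAdjoint)
  rwa [htdc] at this

lemma ContinuousLinearMap.re_inner_apply_self_le_of_le_smul {E : Type*} [NormedAddCommGroup E]
    [InnerProductSpace ℂ E] {P Q : E →L[ℂ] E} {r : ℝ}
    (h : P ≤ r • Q) (x : E) : RCLike.re ⟪P x, x⟫_ℂ ≤ r * RCLike.re ⟪Q x, x⟫_ℂ := by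
  have := ((le_def P (r • Q)).1 h).2 x
  rwa [reApplyInnerSelf, sub_apply, inner_sub_left, map_sub, sub_nonneg, smul_apply,
    RCLike.real_smul_eq_coe_smul (K := ℂ), inner_smul_real_left, RCLike.smul_re] at this

section WeakSum

variable {H : Type*} [NormedAddCommGroup H] [InnerProductSpace ℂ H] {ι : Type*}

open Complex

noncomputable def polarization (s : H → ℂ) (x y : H) : ℂ :=
  (s (x + y) - s (x - y) - I * s (x + I • y) + I * s (x - I • y)) / 4

lemma hasSum_inner_apply_of_hasSum_inner_apply_self (K : ι → H →L[ℂ] H) {s : H → ℂ}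
    (hs : ∀ x, HasSum (fun i => ⟪K i x, x⟫_ℂ) (s x)) (x y : H) :
    HasSum (fun i => ⟪K i x, y⟫_ℂ) (polarization s x y) := by
  have hpol := fun i => inner_map_polarization' (K i : H →ₗ[ℂ] H) x y
  simp only [ContinuousLinearMap.coe_coe] at hpol
  simp only [hpol]
  exact ((((hs _).sub (hs _)).sub ((hs _).mul_left I)).add ((hs _).mul_left I)).div_const 4

lemma norm_polarization_le {s : H → ℂ} {M : ℝ} (hM : ∀ x, ‖s x‖ ≤ M * ‖x‖ ^ 2) (x y : H) :
    ‖polarization s x y‖ ≤ max M 0 * (‖x‖ + ‖y‖) ^ 2 := by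
  have hs : ∀ z : H, ‖z‖ ≤ ‖x‖ + ‖y‖ → ‖s z‖ ≤ max M 0 * (‖x‖ + ‖y‖) ^ 2 := fun z hz =>
    (hM z).trans (mul_le_mul (le_max_left _ _) (pow_le_pow_left₀ (norm_nonneg z) hz 2)
      (sq_nonneg _) (le_max_right _ _))
  have hI : ‖I • y‖ = ‖y‖ := by simp [norm_smul]
  have h₁ := hs _ (norm_add_le x y)
  have h₂ := hs _ (norm_sub_le x y)
  have h₃ := hs _ (hI ▸ norm_add_le x (I • y))
  have h₄ := hs _ (hI ▸ norm_sub_le x (I • y))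
  have := norm_add₄_le (a := s (x + y)) (b := -s (x - y)) (c := -(I * s (x + I • y)))
    (d := I * s (x - I • y))
  simp only [norm_neg, norm_mul, Complex.norm_I, one_mul, ← sub_eq_add_neg] at this
  rw [polarization, norm_div, Complex.norm_ofNat]
  linarith

lemma LinearMap.norm_apply_le_of_le_sq_add (b : H →ₗ⋆[ℂ] H →ₗ[ℂ] ℂ) {M : ℝ}
    (hb : ∀ x y, ‖b x y‖ ≤ M * (‖x‖ + ‖y‖) ^ 2) (x y : H) :
    ‖b x y‖ ≤ 4 * M * ‖x‖ * ‖y‖ := by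
  rcases eq_or_ne x 0 with rfl | hx
  · simp
  rcases eq_or_ne y 0 with rfl | hy
  · simp
  have hx' : 0 < ‖x‖ := norm_pos_iff.2 hx
  have hy' : 0 < ‖y‖ := norm_pos_iff.2 hy
  have h := hb ((‖x‖⁻¹ : ℂ) • x) ((‖y‖⁻¹ : ℂ) • y)
  simp only [map_smulₛₗ, LinearMap.smul_apply, smul_eq_mul, norm_mul, norm_smul,
    RingHom.id_apply, Complex.norm_conj, norm_inv, Complex.norm_real, norm_norm] at h
  rw [inv_mul_cancel₀ hx'.ne', inv_mul_cancel₀ hy'.ne', inv_mul_le_iff₀ hy',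
    inv_mul_le_iff₀ hx'] at h
  linarith

theorem exists_hasSum_inner_apply [CompleteSpace H] (K : ι → H →L[ℂ] H) {s : H → ℂ} {M : ℝ}
    (hs : ∀ x, HasSum (fun i => ⟪K i x, x⟫_ℂ) (s x)) (hM : ∀ x, ‖s x‖ ≤ M * ‖x‖ ^ 2) :
    ∃ T : H →L[ℂ] H, ∀ x y, HasSum (fun i => ⟪K i x, y⟫_ℂ) ⟪T x, y⟫_ℂ := by
  have hpol := hasSum_inner_apply_of_hasSum_inner_apply_self K hs
  have hsum : ∀ x y, Summable (fun i => ⟪K i x, y⟫_ℂ) := fun x y => (hpol x y).summable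
  let b : H →ₗ⋆[ℂ] H →ₗ[ℂ] ℂ := LinearMap.mk₂'ₛₗ (starRingEnd ℂ) (RingHom.id ℂ)
    (fun x y => ∑' i, ⟪K i x, y⟫_ℂ)
    (fun x x' y => by simp only [map_add, inner_add_left, (hsum x y).tsum_add (hsum x' y)])
    (fun c x y => by simp only [map_smul, inner_smul_left, tsum_mul_left, smul_eq_mul])
    (fun x y y' => by simp only [inner_add_right, (hsum x y).tsum_add (hsum x y')])
    (fun c x y => by simp only [inner_smul_right, tsum_mul_left, smul_eq_mul, RingHom.id_apply])
  have hb : ∀ x y, ‖b x y‖ ≤ max M 0 * (‖x‖ + ‖y‖) ^ 2 := fun x y =>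
    (congrArg norm (hpol x y).tsum_eq).trans_le (norm_polarization_le hM x y)
  refine ⟨InnerProductSpace.continuousLinearMapOfBilin
    (b.mkContinuous₂ _ (b.norm_apply_le_of_le_sq_add hb)), fun x y => ?_⟩
  rw [InnerProductSpace.continuousLinearMapOfBilin_apply, LinearMap.mkContinuous₂_apply]
  exact (hsum x y).hasSum

end WeakSum

section Frame

variable {H : Type*} [NormedAddCommGroup H] [InnerProductSpace ℂ H] {f : ℕ → H}

lemma inner_mul_inner_swap_eq_norm_sq (x y : H) :
    ⟪x, y⟫_ℂ * ⟪y, x⟫_ℂ = (‖⟪x, y⟫_ℂ‖ ^ 2 : ℝ) := by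
  rw [← inner_conj_symm y x, Complex.mul_conj', Complex.ofReal_pow]

theorem exists_nonneg_hasSum_inner_mul_inner [CompleteSpace H] (C : H →L[ℂ] H) {s : H → ℝ}
    {B : ℝ} (hs : ∀ x, HasSum (fun i => ⟪f i, x⟫_ℂ * ⟪x, C (f i)⟫_ℂ) (s x : ℂ))
    (hs0 : ∀ x, 0 ≤ s x) (hsB : ∀ x, s x ≤ B * ‖x‖ ^ 2) :
    ∃ T : H →L[ℂ] H, 0 ≤ T ∧
      ∀ x y, HasSum (fun i => ⟪f i, y⟫_ℂ * ⟪x, C (f i)⟫_ℂ) ⟪T x, y⟫_ℂ := by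
  let K : ℕ → H →L[ℂ] H := fun i => (innerSL ℂ (C (f i))).smulRight (f i)
  have hK : ∀ i x y, ⟪K i x, y⟫_ℂ = ⟪f i, y⟫_ℂ * ⟪x, C (f i)⟫_ℂ := by simp [K]
  simp only [← hK] at hs ⊢
  obtain ⟨T, hT⟩ := exists_hasSum_inner_apply K hs (M := B) fun x => by
    rw [Complex.norm_real, Real.norm_of_nonneg (hs0 x)]
    exact hsB x
  refine ⟨T, ?_, hT⟩
  rw [nonneg_iff_isPositive, isPositive_iff_complex]
  intro x
  simp [(hT x x).unique (hs x), hs0]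

lemma hasSum_inner_mul_inner_of_mul_eq_one [CompleteSpace H] {C Cinv T : H →L[ℂ] H}
    (hC : IsSelfAdjoint C) (hCr : C * Cinv = 1)
    (hT : ∀ x y, HasSum (fun i => ⟪f i, y⟫_ℂ * ⟪x, C (f i)⟫_ℂ) ⟪T x, y⟫_ℂ) (x y : H) :
    HasSum (fun i => ⟪f i, y⟫_ℂ * ⟪x, f i⟫_ℂ) ⟪(T * Cinv) x, y⟫_ℂ := by
  have hCx : ∀ i, ⟪Cinv x, C (f i)⟫_ℂ = ⟪x, f i⟫_ℂ := fun i =>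
    calc ⟪Cinv x, C (f i)⟫_ℂ = ⟪(C * Cinv) x, f i⟫_ℂ := (hC.isSymmetric _ _).symm
      _ = ⟪x, f i⟫_ℂ := by rw [hCr, one_apply_eq_self]
  simpa only [hCx, mul_apply_eq_comp] using hT (Cinv x) y

lemma hasSum_norm_inner_sq_of_hasSum {S : H →L[ℂ] H} {x : H}
    (hS : HasSum (fun i => ⟪f i, x⟫_ℂ * ⟪x, f i⟫_ℂ) ⟪S x, x⟫_ℂ) :
    HasSum (fun i => ‖⟪f i, x⟫_ℂ‖ ^ 2) (RCLike.re ⟪S x, x⟫_ℂ) := by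
  simp only [inner_mul_inner_swap_eq_norm_sq] at hS
  simpa only [Complex.ofReal_re, RCLike.re_to_complex] using Complex.hasSum_re hS

lemma ContinuousLinearMap.nonneg_of_hasSum_inner_mul_inner {S : H →L[ℂ] H}
    (hS : ∀ x, HasSum (fun i => ⟪f i, x⟫_ℂ * ⟪x, f i⟫_ℂ) ⟪S x, x⟫_ℂ) : 0 ≤ S := by
  rw [nonneg_iff_isPositive, isPositive_iff_complex]
  intro x
  have hN := hasSum_norm_inner_sq_of_hasSum (hS x)
  refine ⟨((hS x).unique ?_).symm, hN.nonneg fun i => sq_nonneg _⟩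
  simpa only [inner_mul_inner_swap_eq_norm_sq] using Complex.hasSum_ofReal.2 hN

end Frame

theorem controlled_frame_is_frame_general
    {H : Type*} [NormedAddCommGroup H] [InnerProductSpace ℂ H] [CompleteSpace H]
    (C : H →L[ℂ] H) (hC : C.IsPositive)
    (Cinv : H →L[ℂ] H) (hCr : C ∘L Cinv = 1) (hCl : Cinv ∘L C = 1)
    (R : H →L[ℂ] H) (hRsq : R ∘L R = C)
    (R' : H →L[ℂ] H) (hR'sq : R' ∘L R' = Cinv)
    (f : ℕ → H) (A B : ℝ) (hA : 0 < A)
    (s : H → ℝ)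
    (hFrame : ∀ x : H, HasSum (fun i => ⟪f i, x⟫_ℂ * ⟪x, C (f i)⟫_ℂ) ((s x : ℝ) : ℂ) ∧
      A * ‖x‖ ^ 2 ≤ s x ∧ s x ≤ B * ‖x‖ ^ 2) :
    ∀ x : H, ∃ t : ℝ, HasSum (fun i => ‖⟪f i, x⟫_ℂ‖ ^ 2) t ∧
      A * (‖R‖ ^ 2)⁻¹ * ‖x‖ ^ 2 ≤ t ∧ t ≤ B * ‖R'‖ ^ 2 * ‖x‖ ^ 2 := by
  have hs0 : ∀ x, 0 ≤ s x := fun x => (by positivity : 0 ≤ A * ‖x‖ ^ 2).trans (hFrame x).2.1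
  obtain ⟨T, hT0, hT⟩ :=
    exists_nonneg_hasSum_inner_mul_inner C (fun x => (hFrame x).1) hs0 fun x => (hFrame x).2.2
  have hTs : ∀ x, RCLike.re ⟪T x, x⟫_ℂ = s x := fun x => by
    rw [(hT x x).unique (hFrame x).1, RCLike.re_to_complex, Complex.ofReal_re]
  have hS : ∀ x, HasSum (fun i => ⟪f i, x⟫_ℂ * ⟪x, f i⟫_ℂ) ⟪(T * Cinv) x, x⟫_ℂ := fun x =>
    hasSum_inner_mul_inner_of_mul_eq_one hC.isSelfAdjoint hCr hT x x
  obtain ⟨hTS, hST⟩ := hC.isSelfAdjoint.le_norm_smul_mul_and_mul_le_norm_smul hCr hCl hT0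
    (nonneg_of_hasSum_inner_mul_inner hS)
  have hCR : ‖C‖ ≤ ‖R‖ ^ 2 := hRsq ▸ sq ‖R‖ ▸ opNorm_comp_le R R
  have hCinvR' : ‖Cinv‖ ≤ ‖R'‖ ^ 2 := hR'sq ▸ sq ‖R'‖ ▸ opNorm_comp_le R' R'
  intro x
  have hN := hasSum_norm_inner_sq_of_hasSum (hS x)
  have ht := hN.nonneg fun i => sq_nonneg _
  have hlow := hTs x ▸ re_inner_apply_self_le_of_le_smul hTS x
  have hup := hTs x ▸ re_inner_apply_self_le_of_le_smul hST x
  refine ⟨_, hN, ?_, ?_⟩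
  · rw [mul_right_comm, ← div_eq_mul_inv]
    exact div_le_of_le_mul₀ (sq_nonneg _) ht <| (hFrame x).2.1.trans <| hlow.trans <|
      (mul_comm _ _).trans_le (mul_le_mul_of_nonneg_left hCR ht)
  · calc _ ≤ ‖Cinv‖ * s x := hup
      _ ≤ ‖R'‖ ^ 2 * (B * ‖x‖ ^ 2) := mul_le_mul hCinvR' (hFrame x).2.2 (hs0 x) (sq_nonneg _)
      _ = B * ‖R'‖ ^ 2 * ‖x‖ ^ 2 := by ring

/-- Every `C`-controlled frame (with `C` positive and invertible) is an
ordinary frame, with bounds `A·‖C^{1/2}‖⁻² ` and `B·‖C^{-1/2}‖²`.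
Here `R` is the positive square root of `C` and `R'` is the positive square root of `C⁻¹`;
the paper's inner product `⟪f, g⟫` (linear in the first argument) is Mathlib's `⟪g, f⟫_ℂ`. -/
theorem controlled_frame_is_frame
    {H : Type*} [NormedAddCommGroup H] [InnerProductSpace ℂ H] [CompleteSpace H]
    (C : H →L[ℂ] H) (hC : C.IsPositive)
    (Cinv : H →L[ℂ] H) (hCr : C ∘L Cinv = 1) (hCl : Cinv ∘L C = 1)
    (R : H →L[ℂ] H) (hR : R.IsPositive) (hRsq : R ∘L R = C)
    (R' : H →L[ℂ] H) (hR' : R'.IsPositive) (hR'sq : R' ∘L R' = Cinv)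
    (f : ℕ → H) (A B : ℝ) (hA : 0 < A) (hAB : A ≤ B)
    (s : H → ℝ)
    (hFrame : ∀ x : H, HasSum (fun i => ⟪f i, x⟫_ℂ * ⟪x, C (f i)⟫_ℂ) ((s x : ℝ) : ℂ) ∧
      A * ‖x‖ ^ 2 ≤ s x ∧ s x ≤ B * ‖x‖ ^ 2) :
    ∀ x : H, ∃ t : ℝ, HasSum (fun i => ‖⟪f i, x⟫_ℂ‖ ^ 2) t ∧
      A * (‖R‖ ^ 2)⁻¹ * ‖x‖ ^ 2 ≤ t ∧ t ≤ B * ‖R'‖ ^ 2 * ‖x‖ ^ 2 :=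
  controlled_frame_is_frame_general C hC Cinv hCr hCl R hRsq R' hR'sq f A B hA s hFrame
end

section
/- Let H be a complex Hilbert space, let C be a bounded linear operator on H with bounded inverse, and let (f_i)_{i∈ℕ} be a C-controlled frame for H with bounds A, B whose C-controlled frame operator S_C f = ∑_i ⟪f, f_i⟫ C f_i defines a bounded operator on H. Then S_C is self-adjoint, satisfies A‖f‖² ≤ ⟪S_C f, f⟫ ≤ B‖f‖² for all f ∈ H, and S_C is invertible with ‖S_C^{-1}‖ ≤ A^{-1}. -/
/-! Pairing the series defining `S_C x` with `x` identifies `⟪x, S_C x⟫` with the real frame sum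
at `x`. A real quadratic form makes `S_C` self-adjoint, and the lower frame bound makes it coercive:
then `A‖x‖ ≤ ‖S_C x‖` and the range of `S_C` is closed with trivial orthogonal complement, so `S_C`
is invertible with `‖S_C⁻¹‖ ≤ A⁻¹`. -/

open scoped InnerProductSpace NNReal

theorem HasSum.inner_smul_right {𝕜 E ι : Type*} [RCLike 𝕜] [NormedAddCommGroup E]
    [InnerProductSpace 𝕜 E] {c : ι → 𝕜} {g : ι → E} {v : E}
    (h : HasSum (fun i => c i • g i) v) (y : E) :
    HasSum (fun i => c i * ⟪y, g i⟫_𝕜) ⟪y, v⟫_𝕜 := by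
  simpa only [innerSL_apply_apply, _root_.inner_smul_right] using h.mapL (innerSL 𝕜 y)

namespace ContinuousLinearMap

theorem isSelfAdjoint_of_im_inner_self_eq_zero {E : Type*} [NormedAddCommGroup E]
    [InnerProductSpace ℂ E] [CompleteSpace E] {T : E →L[ℂ] E}
    (h : ∀ x, (⟪x, T x⟫_ℂ).im = 0) : IsSelfAdjoint T := by
  rw [isSelfAdjoint_iff_isSymmetric, LinearMap.isSymmetric_iff_inner_map_self_real]
  intro x
  rw [Complex.conj_eq_iff_im, coe_coe, ← inner_conj_symm, Complex.conj_im, h x, neg_zero]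

open RCLike in
theorem exists_inverse_norm_le_of_coercive {𝕜 E : Type*} [RCLike 𝕜] [NormedAddCommGroup E]
    [InnerProductSpace 𝕜 E] [CompleteSpace E] (T : E →L[𝕜] E) {c : ℝ} (hc : 0 < c)
    (h : ∀ x, c * ‖x‖ ^ 2 ≤ re ⟪x, T x⟫_𝕜) :
    ∃ Tinv : E →L[𝕜] E, T ∘L Tinv = 1 ∧ Tinv ∘L T = 1 ∧ ‖Tinv‖ ≤ c⁻¹ := by
  lift c to ℝ≥0 using hc.le
  have hc' : 0 < c := by exact_mod_cast hc
  have hnorm : ∀ x, ‖x‖ ^ 2 * c ≤ ‖⟪T x, x⟫_𝕜‖ := fun x => by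
    rw [norm_inner_symm, mul_comm]
    exact (h x).trans (re_le_norm _)
  obtain ⟨Tinv, hright, hleft⟩ :=
    isUnit_iff_exists.mp (T.isUnit_of_forall_le_norm_inner_map hc' hnorm)
  have hanti := T.antilipschitz_of_forall_le_inner_map hc' hnorm
  refine ⟨Tinv, hright, hleft, Tinv.opNorm_le_bound (by positivity) fun y => ?_⟩
  calc ‖Tinv y‖ ≤ c⁻¹ * ‖T (Tinv y)‖ := by exact_mod_cast T.bound_of_antilipschitz hanti (Tinv y)
    _ = c⁻¹ * ‖y‖ := by rw [show T (Tinv y) = y from DFunLike.congr_fun hright y]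

end ContinuousLinearMap

theorem controlled_frame_operator_properties_general
    {H : Type*} [NormedAddCommGroup H] [InnerProductSpace ℂ H] [CompleteSpace H]
    (C : H →L[ℂ] H)
    (f : ℕ → H) (A B : ℝ) (hA : 0 < A)
    (s : H → ℝ)
    (hFrame : ∀ x : H, HasSum (fun i => ⟪f i, x⟫_ℂ * ⟪x, C (f i)⟫_ℂ) ((s x : ℝ) : ℂ) ∧
      A * ‖x‖ ^ 2 ≤ s x ∧ s x ≤ B * ‖x‖ ^ 2)
    (S : H →L[ℂ] H) (hS : ∀ x : H, HasSum (fun i => ⟪f i, x⟫_ℂ • C (f i)) (S x)) :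
    IsSelfAdjoint S ∧
    (∀ x : H, A * ‖x‖ ^ 2 ≤ (⟪x, S x⟫_ℂ).re ∧ (⟪x, S x⟫_ℂ).re ≤ B * ‖x‖ ^ 2) ∧
    ∃ Sinv : H →L[ℂ] H, S ∘L Sinv = 1 ∧ Sinv ∘L S = 1 ∧ ‖Sinv‖ ≤ A⁻¹ := by
  have hquad : ∀ x : H, ⟪x, S x⟫_ℂ = s x := fun x =>
    ((hS x).inner_smul_right x).unique (hFrame x).1
  have hbounds : ∀ x : H, A * ‖x‖ ^ 2 ≤ (⟪x, S x⟫_ℂ).re ∧ (⟪x, S x⟫_ℂ).re ≤ B * ‖x‖ ^ 2 :=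
    fun x => by simpa only [hquad, Complex.ofReal_re] using (hFrame x).2
  exact ⟨S.isSelfAdjoint_of_im_inner_self_eq_zero fun x => by rw [hquad, Complex.ofReal_im],
    hbounds, S.exists_inverse_norm_le_of_coercive hA fun x => (hbounds x).1⟩

/-- The frame operator `S` of a `C`-controlled frame with bounds `A, B` is
self-adjoint, satisfies `A‖f‖² ≤ ⟪S f, f⟫ ≤ B‖f‖²`, and is invertible with
`‖S⁻¹‖ ≤ A⁻¹`.  The paper's inner product `⟪S f, f⟫` (linear in the first argument)
is Mathlib's `⟪f, S f⟫_ℂ`. -/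
theorem controlled_frame_operator_properties
    {H : Type*} [NormedAddCommGroup H] [InnerProductSpace ℂ H] [CompleteSpace H]
    (C : H →L[ℂ] H)
    (Cinv : H →L[ℂ] H) (hCr : C ∘L Cinv = 1) (hCl : Cinv ∘L C = 1)
    (f : ℕ → H) (A B : ℝ) (hA : 0 < A) (hAB : A ≤ B)
    (s : H → ℝ)
    (hFrame : ∀ x : H, HasSum (fun i => ⟪f i, x⟫_ℂ * ⟪x, C (f i)⟫_ℂ) ((s x : ℝ) : ℂ) ∧
      A * ‖x‖ ^ 2 ≤ s x ∧ s x ≤ B * ‖x‖ ^ 2)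
    (S : H →L[ℂ] H) (hS : ∀ x : H, HasSum (fun i => ⟪f i, x⟫_ℂ • C (f i)) (S x)) :
    IsSelfAdjoint S ∧
    (∀ x : H, A * ‖x‖ ^ 2 ≤ (⟪x, S x⟫_ℂ).re ∧ (⟪x, S x⟫_ℂ).re ≤ B * ‖x‖ ^ 2) ∧
    ∃ Sinv : H →L[ℂ] H, S ∘L Sinv = 1 ∧ Sinv ∘L S = 1 ∧ ‖Sinv‖ ≤ A⁻¹ :=
  controlled_frame_operator_properties_general C f A B hA s hFrame S hS
end

section
/- Let H be a complex Hilbert space, let C be a bounded linear operator on H with bounded inverse, and let (f_i)_{i∈ℕ} be a C-controlled frame for H with bounds A, B whose C-controlled frame operator S_C f = ∑_i ⟪f, f_i⟫ C f_i defines a bounded invertible operator on H. Then for every f ∈ H one has the reconstruction formula f = ∑_i ⟪f, S_C^{-1} f_i⟫ · C f_i, the series converging in H. -/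
open scoped InnerProductSpace

/-- Reconstruction formula `f = ∑_i ⟪f, S⁻¹ f_i⟫ C f_i` for a `C`-controlled
frame with bounded invertible frame operator `S`.  The paper's inner product
`⟪f, S⁻¹ f_i⟫` (linear in the first argument) is Mathlib's `⟪S⁻¹ f_i, f⟫_ℂ`. -/
theorem controlled_frame_reconstruction
    {H : Type*} [NormedAddCommGroup H] [InnerProductSpace ℂ H] [CompleteSpace H]
    (C : H →L[ℂ] H)
    (Cinv : H →L[ℂ] H) (hCr : C ∘L Cinv = 1) (hCl : Cinv ∘L C = 1)
    (f : ℕ → H) (A B : ℝ) (hA : 0 < A) (hAB : A ≤ B)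
    (s : H → ℝ)
    (hFrame : ∀ x : H, HasSum (fun i => ⟪f i, x⟫_ℂ * ⟪x, C (f i)⟫_ℂ) ((s x : ℝ) : ℂ) ∧
      A * ‖x‖ ^ 2 ≤ s x ∧ s x ≤ B * ‖x‖ ^ 2)
    (S : H →L[ℂ] H) (hS : ∀ x : H, HasSum (fun i => ⟪f i, x⟫_ℂ • C (f i)) (S x))
    (Sinv : H →L[ℂ] H) (hSr : S ∘L Sinv = 1) (hSl : Sinv ∘L S = 1) :
    ∀ x : H, HasSum (fun i => ⟪Sinv (f i), x⟫_ℂ • C (f i)) x := by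
  -- ⟪x, S x⟫ = s x for all x
  have hinner : ∀ x : H, ⟪x, S x⟫_ℂ = ((s x : ℝ) : ℂ) := by
    intro x
    have h1 : HasSum (fun i => ⟪x, ⟪f i, x⟫_ℂ • C (f i)⟫_ℂ) ⟪x, S x⟫_ℂ :=
      (innerSL ℂ x).hasSum (hS x)
    have h2 : HasSum (fun i => ⟪f i, x⟫_ℂ * ⟪x, C (f i)⟫_ℂ) ⟪x, S x⟫_ℂ := by
      simpa [inner_smul_right] using h1
    exact h2.unique (hFrame x).1
  -- S is symmetric
  have hsym : LinearMap.IsSymmetric (S : H →ₗ[ℂ] H) := by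
    rw [LinearMap.isSymmetric_iff_inner_map_self_real]
    intro v
    have := hinner v
    rw [← inner_conj_symm] at this
    have h2 : ⟪S v, v⟫_ℂ = ((s v : ℝ) : ℂ) := by
      rw [← inner_conj_symm (S v) v, hinner v, Complex.conj_ofReal]
    simp only [ContinuousLinearMap.coe_coe]
    rw [h2, Complex.conj_ofReal]
  have hSrx : ∀ x : H, S (Sinv x) = x := fun x =>
    congrFun (congrArg (fun T : H →L[ℂ] H => (T : H → H)) hSr) x
  have hSlx : ∀ x : H, Sinv (S x) = x := fun x =>
    congrFun (congrArg (fun T : H →L[ℂ] H => (T : H → H)) hSl) x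
  -- Sinv is symmetric
  have hsyminv : ∀ u x : H, ⟪Sinv u, x⟫_ℂ = ⟪u, Sinv x⟫_ℂ := by
    intro u x
    calc ⟪Sinv u, x⟫_ℂ = ⟪Sinv u, S (Sinv x)⟫_ℂ := by rw [hSrx]
      _ = ⟪S (Sinv u), Sinv x⟫_ℂ := (hsym (Sinv u) (Sinv x)).symm
      _ = ⟪u, Sinv x⟫_ℂ := by rw [hSrx]
  intro x
  have := hS (Sinv x)
  rw [hSrx] at this
  simpa only [hsyminv] using this
end

section
/- Let H be a complex Hilbert space, let C be a bounded linear operator on H with bounded inverse, let U be a bounded invertible operator on H that commutes with C (C∘U = U∘C), and let (f_i)_{i∈ℕ} be a C-controlled frame for H with bounds A, B. Then (U f_i)_{i∈ℕ} is a C-controlled frame for H with bounds A·‖U^{-1}‖^{-2} and B·‖U‖²: for every f ∈ H the series ∑_i ⟪f, U f_i⟫ ⟪C (U f_i), f⟫ converges to a real number and A·‖U^{-1}‖^{-2}·‖f‖² ≤ ∑_i ⟪f, U f_i⟫ ⟪C (U f_i), f⟫ ≤ B·‖U‖²·‖f‖². -/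
open scoped InnerProductSpace

/-- If `U` is a bounded invertible operator commuting with `C` and `(f_i)`
is a `C`-controlled frame with bounds `A, B`, then `(U f_i)` is a `C`-controlled frame
with bounds `A·‖U⁻¹‖⁻²` and `B·‖U‖²`.  The paper's inner product `⟪f, g⟫`
(linear in the first argument) is Mathlib's `⟪g, f⟫_ℂ`. -/
theorem controlled_frame_image_invertible
    {H : Type*} [NormedAddCommGroup H] [InnerProductSpace ℂ H] [CompleteSpace H]
    (C : H →L[ℂ] H)
    (Cinv : H →L[ℂ] H) (hCr : C ∘L Cinv = 1) (hCl : Cinv ∘L C = 1)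
    (U : H →L[ℂ] H)
    (Uinv : H →L[ℂ] H) (hUr : U ∘L Uinv = 1) (hUl : Uinv ∘L U = 1)
    (hcomm : C ∘L U = U ∘L C)
    (f : ℕ → H) (A B : ℝ) (hA : 0 < A) (hAB : A ≤ B)
    (s : H → ℝ)
    (hFrame : ∀ x : H, HasSum (fun i => ⟪f i, x⟫_ℂ * ⟪x, C (f i)⟫_ℂ) ((s x : ℝ) : ℂ) ∧
      A * ‖x‖ ^ 2 ≤ s x ∧ s x ≤ B * ‖x‖ ^ 2) :
    ∀ x : H, ∃ r : ℝ,
      HasSum (fun i => ⟪U (f i), x⟫_ℂ * ⟪x, C (U (f i))⟫_ℂ) ((r : ℝ) : ℂ) ∧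
      A * (‖Uinv‖ ^ 2)⁻¹ * ‖x‖ ^ 2 ≤ r ∧ r ≤ B * ‖U‖ ^ 2 * ‖x‖ ^ 2 := by
  intro x
  set V := ContinuousLinearMap.adjoint U with hV
  refine ⟨s (V x), ?_, ?_, ?_⟩
  · have h := (hFrame (V x)).1
    convert h using 2 with i
    have h1 : ⟪U (f i), x⟫_ℂ = ⟪f i, V x⟫_ℂ :=
      (ContinuousLinearMap.adjoint_inner_right U (f i) x).symm
    have h2 : ⟪x, C (U (f i))⟫_ℂ = ⟪V x, C (f i)⟫_ℂ := by
      have : C (U (f i)) = U (C (f i)) := by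
        have := congrArg (fun T => T (f i)) hcomm
        simpa using this
      rw [this, ContinuousLinearMap.adjoint_inner_left]
    rw [h1, h2]
  · -- lower bound
    have hx : ‖x‖ ≤ ‖Uinv‖ * ‖V x‖ := by
      have hid : (ContinuousLinearMap.adjoint Uinv) (V x) = x := by
        have : ContinuousLinearMap.adjoint Uinv ∘L V = 1 := by
          rw [hV, ← ContinuousLinearMap.adjoint_comp, hUr]
          simp [ContinuousLinearMap.one_def, ContinuousLinearMap.adjoint_id]
        have := congrArg (fun T => T x) this
        simpa using this
      calc ‖x‖ = ‖(ContinuousLinearMap.adjoint Uinv) (V x)‖ := by rw [hid]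
        _ ≤ ‖ContinuousLinearMap.adjoint Uinv‖ * ‖V x‖ :=
            (ContinuousLinearMap.adjoint Uinv).le_opNorm _
        _ = ‖Uinv‖ * ‖V x‖ := by
            rw [LinearIsometryEquiv.norm_map ContinuousLinearMap.adjoint Uinv]
    have hlow := (hFrame (V x)).2.1
    rcases eq_or_lt_of_le (norm_nonneg Uinv) with h0 | h0
    · have hx0 : ‖x‖ = 0 := le_antisymm (by simpa [← h0] using hx) (norm_nonneg x)
      have : (0:ℝ) ≤ s (V x) := le_trans (by positivity) hlow
      simp [hx0]
      nlinarith [this]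
    · have hVx2 : ‖x‖ ^ 2 ≤ ‖Uinv‖ ^ 2 * ‖V x‖ ^ 2 := by
        nlinarith [norm_nonneg x, norm_nonneg (V x)]
      have h1 : (‖Uinv‖ ^ 2)⁻¹ * ‖x‖ ^ 2 ≤ ‖V x‖ ^ 2 := by
        rw [inv_mul_le_iff₀ (by positivity)]; exact hVx2
      have h2 : A * ((‖Uinv‖ ^ 2)⁻¹ * ‖x‖ ^ 2) ≤ A * ‖V x‖ ^ 2 :=
        mul_le_mul_of_nonneg_left h1 hA.le
      rw [mul_assoc]
      linarith
  · have hVx : ‖V x‖ ≤ ‖U‖ * ‖x‖ := by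
      calc ‖V x‖ ≤ ‖V‖ * ‖x‖ := V.le_opNorm x
        _ = ‖U‖ * ‖x‖ := by
            rw [hV, LinearIsometryEquiv.norm_map ContinuousLinearMap.adjoint U]
    have hup := (hFrame (V x)).2.2
    have hB : 0 ≤ B := le_trans hA.le hAB
    have h2 : ‖V x‖ ^ 2 ≤ (‖U‖ * ‖x‖) ^ 2 :=
      pow_le_pow_left₀ (norm_nonneg _) hVx 2
    have h3 := mul_le_mul_of_nonneg_left h2 hB
    nlinarith
end

section
/- Let H be a complex Hilbert space, let C be a bounded linear operator on H with bounded inverse, and let U be a unitary operator on H that commutes with C (C∘U = U∘C). Let (f_i)_{i∈ℕ} and (e_i)_{i∈ℕ} be C-controlled frames for H satisfying the duality relation f = ∑_i ⟪f, e_i⟫ C f_i for all f ∈ H. Then (U f_i)_{i∈ℕ} and (U e_i)_{i∈ℕ} are C-controlled frames for H and satisfy the duality relation f = ∑_i ⟪f, U e_i⟫ C (U f_i) for all f ∈ H. -/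
open scoped InnerProductSpace

/-- A sequence `(g_i)` in a complex Hilbert space `H` is a `C`-controlled frame if there
are constants `0 < A ≤ B` such that for every `x` the series
`∑_i ⟪x, g_i⟫⟪C g_i, x⟫` (paper's inner product, linear in the first argument; in
Mathlib's convention `∑_i ⟪g_i, x⟫_ℂ · ⟪x, C g_i⟫_ℂ`) converges to a real number `r`
with `A‖x‖² ≤ r ≤ B‖x‖²`. -/
def IsControlledFrame {H : Type*} [NormedAddCommGroup H] [InnerProductSpace ℂ H]
    (C : H →L[ℂ] H) (g : ℕ → H) : Prop :=
  ∃ A B : ℝ, 0 < A ∧ A ≤ B ∧ ∀ x : H, ∃ r : ℝ,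
    HasSum (fun i => ⟪g i, x⟫_ℂ * ⟪x, C (g i)⟫_ℂ) ((r : ℝ) : ℂ) ∧
    A * ‖x‖ ^ 2 ≤ r ∧ r ≤ B * ‖x‖ ^ 2

private lemma unitary_image_frame
    {H : Type*} [NormedAddCommGroup H] [InnerProductSpace ℂ H] [CompleteSpace H]
    (C : H →L[ℂ] H) (U : H →L[ℂ] H)
    (hUr : U ∘L (ContinuousLinearMap.adjoint U) = 1)
    (hcomm : C ∘L U = U ∘L C)
    (g : ℕ → H) (hg : IsControlledFrame C g) :
    IsControlledFrame C (fun i => U (g i)) := by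
  obtain ⟨A, B, hA, hAB, h⟩ := hg
  refine ⟨A, B, hA, hAB, fun x => ?_⟩
  obtain ⟨r, hsum, h1, h2⟩ := h ((ContinuousLinearMap.adjoint U) x)
  have hnorm : ‖(ContinuousLinearMap.adjoint U) x‖ = ‖x‖ := by
    have h0 : ⟪(ContinuousLinearMap.adjoint U) x, (ContinuousLinearMap.adjoint U) x⟫_ℂ
        = ⟪x, x⟫_ℂ := by
      rw [ContinuousLinearMap.adjoint_inner_right]
      rw [show U ((ContinuousLinearMap.adjoint U) x) = x from
        congrFun (congrArg DFunLike.coe hUr) x]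
    rw [inner_self_eq_norm_sq_to_K (𝕜 := ℂ), inner_self_eq_norm_sq_to_K (𝕜 := ℂ)] at h0
    have h1 : ‖(ContinuousLinearMap.adjoint U) x‖ ^ 2 = ‖x‖ ^ 2 := by
      exact_mod_cast h0
    nlinarith [norm_nonneg ((ContinuousLinearMap.adjoint U) x), norm_nonneg x]
  refine ⟨r, ?_, by rwa [hnorm] at h1, by rwa [hnorm] at h2⟩
  convert hsum using 2 with i
  have hCU : C (U (g i)) = U (C (g i)) := congrFun (congrArg DFunLike.coe hcomm) (g i)
  rw [hCU, ContinuousLinearMap.adjoint_inner_right, ContinuousLinearMap.adjoint_inner_left]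

/-- If `U` is unitary and commutes with `C`, and `(f_i)`, `(e_i)` are
`C`-controlled frames in duality (`f = ∑_i ⟪f, e_i⟫ C f_i` for all `f`), then `(U f_i)`
and `(U e_i)` are `C`-controlled frames in duality.  The paper's inner product `⟪f, g⟫`
(linear in the first argument) is Mathlib's `⟪g, f⟫_ℂ`. -/
theorem controlled_dual_pair_unitary_image
    {H : Type*} [NormedAddCommGroup H] [InnerProductSpace ℂ H] [CompleteSpace H]
    (C : H →L[ℂ] H)
    (Cinv : H →L[ℂ] H) (hCr : C ∘L Cinv = 1) (hCl : Cinv ∘L C = 1)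
    (U : H →L[ℂ] H)
    (hUl : (ContinuousLinearMap.adjoint U) ∘L U = 1)
    (hUr : U ∘L (ContinuousLinearMap.adjoint U) = 1)
    (hcomm : C ∘L U = U ∘L C)
    (f e : ℕ → H)
    (hf : IsControlledFrame C f) (he : IsControlledFrame C e)
    (hdual : ∀ x : H, HasSum (fun i => ⟪e i, x⟫_ℂ • C (f i)) x) :
    IsControlledFrame C (fun i => U (f i)) ∧
    IsControlledFrame C (fun i => U (e i)) ∧
    ∀ x : H, HasSum (fun i => ⟪U (e i), x⟫_ℂ • C (U (f i))) x := by
  refine ⟨unitary_image_frame C U hUr hcomm f hf,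
    unitary_image_frame C U hUr hcomm e he, fun x => ?_⟩
  have h := (hdual ((ContinuousLinearMap.adjoint U) x)).mapL U
  have hx : U ((ContinuousLinearMap.adjoint U) x) = x :=
    congrFun (congrArg DFunLike.coe hUr) x
  rw [hx] at h
  convert h using 2 with i
  have hCU : C (U (f i)) = U (C (f i)) := congrFun (congrArg DFunLike.coe hcomm) (f i)
  rw [hCU, map_smul, ContinuousLinearMap.adjoint_inner_right]
end

section
/- Let H and K be complex Hilbert spaces, let C₁ and C₂ be bounded linear operators with bounded inverses on H and K respectively, let (f_i)_{i∈ℕ} be a C₁-controlled frame for H with bounds A, B, and let (g_i)_{i∈ℕ} be a C₂-controlled frame for K with bounds C, D. Assume the cross conditions: for all f ∈ H and g ∈ K, ∑_i ⟪f, f_i⟫_H ⟪C₂ g_i, g⟫_K = 0 and ∑_i ⟪g, g_i⟫_K ⟪C₁ f_i, f⟫_H = 0 (both series converging). Then the sequence ((f_i, g_i))_{i∈ℕ} in the Hilbert direct sum H ⊕ K (with inner product ⟪(f,g),(f',g')⟫ = ⟪f,f'⟫_H + ⟪g,g'⟫_K) is a (C₁ ⊕ C₂)-controlled frame for H ⊕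 K with bounds min{A, C} and max{B, D}, where (C₁ ⊕ C₂)(f, g) = (C₁ f, C₂ g). -/
open scoped InnerProductSpace

/-- Direct sum of controlled frames.  If `(f_i)` is a `C₁`-controlled frame
for `H` with bounds `A, B`, `(g_i)` is a `C₂`-controlled frame for `K` with bounds
`A', B'`, and the two cross conditions `∑_i ⟪f, f_i⟫⟪C₂ g_i, g⟫ = 0` and
`∑_i ⟪g, g_i⟫⟪C₁ f_i, f⟫ = 0` hold, then `((f_i, g_i))` is a `(C₁ ⊕ C₂)`-controlled
frame for the Hilbert direct sum `H ⊕ K` (modelled as `WithLp 2 (H × K)`, whose inner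
product is `⟪(f,g),(f',g')⟫ = ⟪f,f'⟫_H + ⟪g,g'⟫_K`) with bounds `min A A'` and
`max B B'`.  The paper's inner product `⟪f, g⟫` (linear in the first argument) is
Mathlib's `⟪g, f⟫_ℂ`. -/
theorem controlled_frame_direct_sum
    {H : Type*} [NormedAddCommGroup H] [InnerProductSpace ℂ H] [CompleteSpace H]
    {K : Type*} [NormedAddCommGroup K] [InnerProductSpace ℂ K] [CompleteSpace K]
    (C₁ : H →L[ℂ] H)
    (C₁inv : H →L[ℂ] H) (hC₁r : C₁ ∘L C₁inv = 1) (hC₁l : C₁inv ∘L C₁ = 1)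
    (C₂ : K →L[ℂ] K)
    (C₂inv : K →L[ℂ] K) (hC₂r : C₂ ∘L C₂inv = 1) (hC₂l : C₂inv ∘L C₂ = 1)
    (f : ℕ → H) (g : ℕ → K) (A B A' B' : ℝ)
    (hA : 0 < A) (hAB : A ≤ B) (hA' : 0 < A') (hA'B' : A' ≤ B')
    (s : H → ℝ)
    (hFrame₁ : ∀ x : H, HasSum (fun i => ⟪f i, x⟫_ℂ * ⟪x, C₁ (f i)⟫_ℂ) ((s x : ℝ) : ℂ) ∧
      A * ‖x‖ ^ 2 ≤ s x ∧ s x ≤ B * ‖x‖ ^ 2)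
    (t : K → ℝ)
    (hFrame₂ : ∀ y : K, HasSum (fun i => ⟪g i, y⟫_ℂ * ⟪y, C₂ (g i)⟫_ℂ) ((t y : ℝ) : ℂ) ∧
      A' * ‖y‖ ^ 2 ≤ t y ∧ t y ≤ B' * ‖y‖ ^ 2)
    (hcross₁ : ∀ (x : H) (y : K),
      HasSum (fun i => ⟪f i, x⟫_ℂ * ⟪y, C₂ (g i)⟫_ℂ) (0 : ℂ))
    (hcross₂ : ∀ (x : H) (y : K),
      HasSum (fun i => ⟪g i, y⟫_ℂ * ⟪x, C₁ (f i)⟫_ℂ) (0 : ℂ))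
    -- the direct-sum operator `C₁ ⊕ C₂` and the direct-sum sequence `(f_i, g_i)`:
    (CD : WithLp 2 (H × K) →L[ℂ] WithLp 2 (H × K))
    (hCD : ∀ z : WithLp 2 (H × K),
      CD z = (WithLp.prodContinuousLinearEquiv 2 ℂ H K).symm
        (C₁ ((WithLp.prodContinuousLinearEquiv 2 ℂ H K) z).1,
         C₂ ((WithLp.prodContinuousLinearEquiv 2 ℂ H K) z).2))
    (h : ℕ → WithLp 2 (H × K))
    (hh : ∀ i, h i = (WithLp.prodContinuousLinearEquiv 2 ℂ H K).symm (f i, g i)) :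
    ∀ z : WithLp 2 (H × K), ∃ r : ℝ,
      HasSum (fun i => ⟪h i, z⟫_ℂ * ⟪z, CD (h i)⟫_ℂ) ((r : ℝ) : ℂ) ∧
      min A A' * ‖z‖ ^ 2 ≤ r ∧ r ≤ max B B' * ‖z‖ ^ 2 := by
  intro z
  set x : H := z.fst with hx
  set y : K := z.snd with hy
  obtain ⟨hs, hsA, hsB⟩ := hFrame₁ x
  obtain ⟨ht, htA, htB⟩ := hFrame₂ y
  refine ⟨s x + t y, ?_, ?_, ?_⟩
  · have key : ∀ i, ⟪h i, z⟫_ℂ * ⟪z, CD (h i)⟫_ℂ =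
        (⟪f i, x⟫_ℂ * ⟪x, C₁ (f i)⟫_ℂ + ⟪g i, y⟫_ℂ * ⟪y, C₂ (g i)⟫_ℂ) +
        (⟪f i, x⟫_ℂ * ⟪y, C₂ (g i)⟫_ℂ + ⟪g i, y⟫_ℂ * ⟪x, C₁ (f i)⟫_ℂ) := by
      intro i
      rw [hh, hCD]
      have e1 : ⟪((WithLp.prodContinuousLinearEquiv 2 ℂ H K).symm (f i, g i) :
          WithLp 2 (H × K)), z⟫_ℂ = ⟪f i, x⟫_ℂ + ⟪g i, y⟫_ℂ := by
        rw [WithLp.prod_inner_apply]; rfl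
      have e2 : ⟪z, ((WithLp.prodContinuousLinearEquiv 2 ℂ H K).symm
          (C₁ ((WithLp.prodContinuousLinearEquiv 2 ℂ H K)
              ((WithLp.prodContinuousLinearEquiv 2 ℂ H K).symm (f i, g i))).1,
           C₂ ((WithLp.prodContinuousLinearEquiv 2 ℂ H K)
              ((WithLp.prodContinuousLinearEquiv 2 ℂ H K).symm (f i, g i))).2) :
          WithLp 2 (H × K))⟫_ℂ = ⟪x, C₁ (f i)⟫_ℂ + ⟪y, C₂ (g i)⟫_ℂ := by
        rw [WithLp.prod_inner_apply]
        simp only [ContinuousLinearEquiv.apply_symm_apply]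
        rfl
      rw [e1, e2]
      ring
    have hsum : HasSum (fun i =>
        (⟪f i, x⟫_ℂ * ⟪x, C₁ (f i)⟫_ℂ + ⟪g i, y⟫_ℂ * ⟪y, C₂ (g i)⟫_ℂ) +
        (⟪f i, x⟫_ℂ * ⟪y, C₂ (g i)⟫_ℂ + ⟪g i, y⟫_ℂ * ⟪x, C₁ (f i)⟫_ℂ))
        (((s x : ℂ) + (t y : ℂ)) + (0 + 0)) :=
      (hs.add ht).add ((hcross₁ x y).add (hcross₂ x y))
    rw [show ((s x + t y : ℝ) : ℂ) = ((s x : ℂ) + (t y : ℂ)) + (0 + 0) by push_cast; ring]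
    exact HasSum.congr_fun hsum key
  · have hnorm : ‖z‖ ^ 2 = ‖x‖ ^ 2 + ‖y‖ ^ 2 := WithLp.prod_norm_sq_eq_of_L2 z
    rw [hnorm, mul_add]
    have h1 : min A A' * ‖x‖ ^ 2 ≤ s x :=
      le_trans (mul_le_mul_of_nonneg_right (min_le_left _ _) (by positivity)) hsA
    have h2 : min A A' * ‖y‖ ^ 2 ≤ t y :=
      le_trans (mul_le_mul_of_nonneg_right (min_le_right _ _) (by positivity)) htA
    linarith
  · have hnorm : ‖z‖ ^ 2 = ‖x‖ ^ 2 + ‖y‖ ^ 2 := WithLp.prod_norm_sq_eq_of_L2 z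
    rw [hnorm, mul_add]
    have h1 : s x ≤ max B B' * ‖x‖ ^ 2 :=
      le_trans hsB (mul_le_mul_of_nonneg_right (le_max_left _ _) (by positivity))
    have h2 : t y ≤ max B B' * ‖y‖ ^ 2 :=
      le_trans htB (mul_le_mul_of_nonneg_right (le_max_right _ _) (by positivity))
    linarith
end

section
/- Let H and K be complex Hilbert spaces, let C₁ and C₂ be bounded linear operators with bounded inverses on H and K respectively, let (f_i)_{i∈ℕ} be a C₁-controlled frame for H with bounds A, B, and let (g_j)_{j∈ℕ} be a C₂-controlled frame for K with bounds C, D. Then for all f ∈ H and g ∈ K the doubly indexed family (⟪f, f_i⟫_H ⟪C₁ f_i, f⟫_H · ⟪g, g_j⟫_K ⟪C₂ g_j, g⟫_K)_{(i,j)∈ℕ×ℕ} is summable, its sum is a real number, and A·C·‖f‖²·‖g‖² ≤ ∑_{(i,j)} ⟪f, f_i⟫_H ⟪C₁ f_i, f⟫_H ⟪g, g_j⟫_K ⟪C₂ g_j, g⟫_K ≤ B·D·‖f‖²·‖g‖². -/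
open scoped InnerProductSpace

/-- Tensor product of controlled frames (scalar form).  If `(f_i)` is a
`C₁`-controlled frame for `H` with bounds `A, B` and `(g_j)` is a `C₂`-controlled frame
for `K` with bounds `A', B'`, then for all `f ∈ H`, `g ∈ K` the doubly indexed family
`(⟪f,f_i⟫⟪C₁ f_i,f⟫ · ⟪g,g_j⟫⟪C₂ g_j,g⟫)_{(i,j)}` is summable with real sum `r` and
`A·A'·‖f‖²‖g‖² ≤ r ≤ B·B'·‖f‖²‖g‖²`.  The paper's inner product `⟪f, g⟫` (linear in the
first argument) is Mathlib's `⟪g, f⟫_ℂ`. -/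
theorem controlled_frame_tensor_product
    {H : Type*} [NormedAddCommGroup H] [InnerProductSpace ℂ H] [CompleteSpace H]
    {K : Type*} [NormedAddCommGroup K] [InnerProductSpace ℂ K] [CompleteSpace K]
    (C₁ : H →L[ℂ] H)
    (C₁inv : H →L[ℂ] H) (hC₁r : C₁ ∘L C₁inv = 1) (hC₁l : C₁inv ∘L C₁ = 1)
    (C₂ : K →L[ℂ] K)
    (C₂inv : K →L[ℂ] K) (hC₂r : C₂ ∘L C₂inv = 1) (hC₂l : C₂inv ∘L C₂ = 1)
    (f : ℕ → H) (g : ℕ → K) (A B A' B' : ℝ)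
    (hA : 0 < A) (hAB : A ≤ B) (hA' : 0 < A') (hA'B' : A' ≤ B')
    (s : H → ℝ)
    (hFrame₁ : ∀ x : H, HasSum (fun i => ⟪f i, x⟫_ℂ * ⟪x, C₁ (f i)⟫_ℂ) ((s x : ℝ) : ℂ) ∧
      A * ‖x‖ ^ 2 ≤ s x ∧ s x ≤ B * ‖x‖ ^ 2)
    (t : K → ℝ)
    (hFrame₂ : ∀ y : K, HasSum (fun j => ⟪g j, y⟫_ℂ * ⟪y, C₂ (g j)⟫_ℂ) ((t y : ℝ) : ℂ) ∧
      A' * ‖y‖ ^ 2 ≤ t y ∧ t y ≤ B' * ‖y‖ ^ 2) :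
    ∀ (x : H) (y : K), ∃ r : ℝ,
      HasSum (fun p : ℕ × ℕ =>
        (⟪f p.1, x⟫_ℂ * ⟪x, C₁ (f p.1)⟫_ℂ) * (⟪g p.2, y⟫_ℂ * ⟪y, C₂ (g p.2)⟫_ℂ))
        ((r : ℝ) : ℂ) ∧
      A * A' * (‖x‖ ^ 2 * ‖y‖ ^ 2) ≤ r ∧ r ≤ B * B' * (‖x‖ ^ 2 * ‖y‖ ^ 2) := by
  intro x y
  obtain ⟨hsx, hsxA, hsxB⟩ := hFrame₁ x
  obtain ⟨hty, htyA, htyB⟩ := hFrame₂ y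
  set a : ℕ → ℂ := fun i => ⟪f i, x⟫_ℂ * ⟪x, C₁ (f i)⟫_ℂ with ha
  set b : ℕ → ℂ := fun j => ⟪g j, y⟫_ℂ * ⟪y, C₂ (g j)⟫_ℂ with hb
  have hna : Summable (fun i => ‖a i‖) := (summable_norm_iff).2 hsx.summable
  have hnb : Summable (fun j => ‖b j‖) := (summable_norm_iff).2 hty.summable
  have hprod : Summable (fun p : ℕ × ℕ => a p.1 * b p.2) := by
    apply Summable.of_norm
    have := hna.mul_of_nonneg hnb (fun i => norm_nonneg _) (fun j => norm_nonneg _)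
    simpa [norm_mul] using this
  refine ⟨s x * t y, ?_, ?_, ?_⟩
  · have := hsx.mul hty hprod
    simpa using this
  · have hx2 : (0:ℝ) ≤ ‖x‖ ^ 2 := by positivity
    have hy2 : (0:ℝ) ≤ ‖y‖ ^ 2 := by positivity
    calc A * A' * (‖x‖ ^ 2 * ‖y‖ ^ 2) = (A * ‖x‖ ^ 2) * (A' * ‖y‖ ^ 2) := by ring
    _ ≤ s x * t y := by
        apply mul_le_mul hsxA htyA (by positivity)
        exact le_trans (by positivity) hsxA
  · have hsx0 : 0 ≤ s x := le_trans (by positivity) hsxA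
    have hty0 : 0 ≤ t y := le_trans (by positivity) htyA
    calc s x * t y ≤ (B * ‖x‖ ^ 2) * (B' * ‖y‖ ^ 2) :=
          mul_le_mul hsxB htyB hty0 (le_trans hsx0 hsxB)
    _ = B * B' * (‖x‖ ^ 2 * ‖y‖ ^ 2) := by ring
end

section
/- Let H and K be complex Hilbert spaces, let C₁ and C₂ be bounded linear operators with bounded inverses on H and K respectively, and let (f_i)_{i∈ℕ} in H and (g_j)_{j∈ℕ} in K be sequences such that for every f ∈ H the series σ₁(f) = ∑_i ⟪f, f_i⟫_H ⟪C₁ f_i, f⟫_H converges to a real number which is positive whenever f ≠ 0, and for every g ∈ K the series σ₂(g) = ∑_j ⟪g, g_j⟫_K ⟪C₂ g_j, g⟫_K converges to a real number which is positive whenever g ≠ 0. Suppose there exist constants 0 < A ≤ B such that A·‖f‖²·‖g‖² ≤ σ₁(f)·σ₂(g) ≤ B·‖f‖²·‖g‖² for all f ∈ H and g ∈ K. Then there exist constants 0 < A₁ ≤ B₁ with A₁‖f‖² ≤ σ₁(f) ≤ B₁‖f‖² for all f ∈ H, and constants 0 < A₂ ≤ B₂ with A₂‖g‖² ≤ σ₂(g)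 ≤ B₂‖g‖² for all g ∈ K; i.e. (f_i) is a C₁-controlled frame for H and (g_j) is a C₂-controlled frame for K. -/
open scoped InnerProductSpace

/-- If the products `σ₁(f)·σ₂(g)` of the controlled-frame sums of two
sequences satisfy two-sided frame bounds `A‖f‖²‖g‖² ≤ σ₁(f)σ₂(g) ≤ B‖f‖²‖g‖²` (with the
sums positive on nonzero vectors), then each factor sequence satisfies controlled-frame
bounds, i.e. `(f_i)` is a `C₁`-controlled frame for `H` and `(g_j)` is a `C₂`-controlled
frame for `K`.  (Scalar form of: if `(f_i ⊗ g_j)` is a `(C₁ ⊗ C₂)`-controlled frame for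
`H ⊗ K` then the factors are controlled frames; the spaces are nontrivial as in the
paper.)  The paper's inner product `⟪f, g⟫` (linear in the first argument) is Mathlib's
`⟪g, f⟫_ℂ`. -/
theorem controlled_frame_tensor_product_factors
    {H : Type*} [NormedAddCommGroup H] [InnerProductSpace ℂ H] [CompleteSpace H]
    [Nontrivial H]
    {K : Type*} [NormedAddCommGroup K] [InnerProductSpace ℂ K] [CompleteSpace K]
    [Nontrivial K]
    (C₁ : H →L[ℂ] H)
    (C₁inv : H →L[ℂ] H) (hC₁r : C₁ ∘L C₁inv = 1) (hC₁l : C₁inv ∘L C₁ = 1)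
    (C₂ : K →L[ℂ] K)
    (C₂inv : K →L[ℂ] K) (hC₂r : C₂ ∘L C₂inv = 1) (hC₂l : C₂inv ∘L C₂ = 1)
    (f : ℕ → H) (g : ℕ → K)
    (σ₁ : H → ℝ) (σ₂ : K → ℝ)
    (hσ₁ : ∀ x : H, HasSum (fun i => ⟪f i, x⟫_ℂ * ⟪x, C₁ (f i)⟫_ℂ) ((σ₁ x : ℝ) : ℂ))
    (hσ₁pos : ∀ x : H, x ≠ 0 → 0 < σ₁ x)
    (hσ₂ : ∀ y : K, HasSum (fun j => ⟪g j, y⟫_ℂ * ⟪y, C₂ (g j)⟫_ℂ) ((σ₂ y : ℝ) : ℂ))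
    (hσ₂pos : ∀ y : K, y ≠ 0 → 0 < σ₂ y)
    (A B : ℝ) (hA : 0 < A) (hAB : A ≤ B)
    (hbounds : ∀ (x : H) (y : K),
      A * (‖x‖ ^ 2 * ‖y‖ ^ 2) ≤ σ₁ x * σ₂ y ∧
      σ₁ x * σ₂ y ≤ B * (‖x‖ ^ 2 * ‖y‖ ^ 2)) :
    (∃ A₁ B₁ : ℝ, 0 < A₁ ∧ A₁ ≤ B₁ ∧
      ∀ x : H, A₁ * ‖x‖ ^ 2 ≤ σ₁ x ∧ σ₁ x ≤ B₁ * ‖x‖ ^ 2) ∧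
    (∃ A₂ B₂ : ℝ, 0 < A₂ ∧ A₂ ≤ B₂ ∧
      ∀ y : K, A₂ * ‖y‖ ^ 2 ≤ σ₂ y ∧ σ₂ y ≤ B₂ * ‖y‖ ^ 2) := by
  obtain ⟨y₀, hy₀⟩ := exists_ne (0 : K)
  obtain ⟨x₀, hx₀⟩ := exists_ne (0 : H)
  have hsy : 0 < σ₂ y₀ := hσ₂pos y₀ hy₀
  have hsx : 0 < σ₁ x₀ := hσ₁pos x₀ hx₀
  have hny : (0:ℝ) < ‖y₀‖ ^ 2 := by have := norm_pos_iff.mpr hy₀; positivity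
  have hnx : (0:ℝ) < ‖x₀‖ ^ 2 := by have := norm_pos_iff.mpr hx₀; positivity
  constructor
  · refine ⟨A * ‖y₀‖ ^ 2 / σ₂ y₀, B * ‖y₀‖ ^ 2 / σ₂ y₀, by positivity, ?_, ?_⟩
    · gcongr
    · intro x
      obtain ⟨h1, h2⟩ := hbounds x y₀
      constructor
      · rw [div_mul_eq_mul_div, div_le_iff₀ hsy]; nlinarith
      · rw [div_mul_eq_mul_div, le_div_iff₀ hsy]; nlinarith
  · refine ⟨A * ‖x₀‖ ^ 2 / σ₁ x₀, B * ‖x₀‖ ^ 2 / σ₁ x₀, by positivity, ?_, ?_⟩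
    · gcongr
    · intro y
      obtain ⟨h1, h2⟩ := hbounds x₀ y
      constructor
      · rw [div_mul_eq_mul_div, div_le_iff₀ hsx]; nlinarith
      · rw [div_mul_eq_mul_div, le_div_iff₀ hsx]; nlinarith
end
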